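/- arXiv:1712.00850 — 2 statements merged into one kernel-verified Lean document; each statement's English description precedes it below -/
import Mathlib

section
/- Let F : C → C' be an exact functor between triangulated categories with weight structures w and w', and assume F is essentially surjective on objects. Then F is weight-exact if and only if C'_{w'≤0} is the Karoubi-closure of F(C_{w≤0}) in C' and C'_{w'≥0} is the Karoubi-closure of F(C_{w≥0}) in C'. -/
open CategoryTheory CategoryTheory.Limits CategoryTheory.Pretriangulated ZeroObject

universe v u

variable (C : Type u) [Category.{v} C] [HasZeroObject C] [Preadditive C] [HasShift C ℤ]
  [∀ n : ℤ, (shiftFunctor C n).Additive] [Pretriangulated C]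

/-- A weight structure on a pretriangulated category `C`, given by the two classes
`le = C_{w≤0}` and `ge = C_{w≥0}` of objects. -/
structure WeightStructure where
  le : Set C
  ge : Set C
  le_retract : ∀ ⦃X Y : C⦄, Y ∈ le → (∃ (s : X ⟶ Y) (r : Y ⟶ X), s ≫ r = 𝟙 X) → X ∈ le
  ge_retract : ∀ ⦃X Y : C⦄, Y ∈ ge → (∃ (s : X ⟶ Y) (r : Y ⟶ X), s ≫ r = 𝟙 X) → X ∈ ge
  le_shift : ∀ ⦃X : C⦄, X ∈ le → X⟦(-1 : ℤ)⟧ ∈ le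
  ge_shift : ∀ ⦃X : C⦄, X ∈ ge → X⟦(1 : ℤ)⟧ ∈ ge
  orth : ∀ ⦃X Y : C⦄, X ∈ le → Y ∈ ge → ∀ f : X ⟶ Y⟦(1 : ℤ)⟧, f = 0
  wd : ∀ M : C, ∃ (L R : C) (f : L ⟶ M) (g : M ⟶ R⟦(1 : ℤ)⟧) (h : R⟦(1 : ℤ)⟧ ⟶ L⟦(1 : ℤ)⟧),
    L ∈ le ∧ R ∈ ge ∧ Triangle.mk f g h ∈ distTriang C

variable {C' : Type u} [Category.{v} C'] [HasZeroObject C'] [Preadditive C'] [HasShift C' ℤ]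
  [∀ n : ℤ, (shiftFunctor C' n).Additive] [Pretriangulated C']

/-- The Karoubi-closure of a class of objects: all retracts of its elements. -/
def KarClosure (S : Set C) : Set C :=
  {X | ∃ Z ∈ S, ∃ (s : X ⟶ Z) (r : Z ⟶ X), s ≫ r = 𝟙 X}

/-!
Weight-exactness gives one inclusion of each equality; the other comes from orthogonality. For
`Y ∈ C'_{w'≤0}` write `Y ≅ F M` and apply `F` to a weight decomposition `L → M → R[1]` of `M`:
the second map `F M → F(R)[1]` vanishes, so `F M`, hence `Y`, is a retract of `F L`. Dually, for
`Y ∈ C'_{w'≥0}` decompose `M[1]`: now the first map `F L → Y[1]` vanishes, so `Y[1]` is a retract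
of `F(R)[1]`, and shifting back makes `Y` a retract of `F R`.
-/

namespace CategoryTheory

def Retract.preimage {D E : Type*} [Category D] [Category E] {G : D ⥤ E} (hG : G.FullyFaithful)
    {X Y : D} (h : Retract (G.obj X) (G.obj Y)) : Retract X Y where
  i := hG.preimage h.i
  r := hG.preimage h.r
  retract := hG.map_injective (by simp)

namespace Pretriangulated

variable {D : Type*} [Category D] [Preadditive D] [HasZeroObject D] [HasShift D ℤ]
  [∀ n : ℤ, (shiftFunctor D n).Additive] [Pretriangulated D] {T : Triangle D}

noncomputable def retractObj₁OfMor₂EqZero (hT : T ∈ distTriang D) (h : T.mor₂ = 0) :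
    Retract T.obj₂ T.obj₁ :=
  have := Triangle.epi₁ T hT h
  have := isSplitEpi_of_epi T.mor₁
  { i := section_ T.mor₁, r := T.mor₁ }

noncomputable def retractObj₃OfMor₁EqZero (hT : T ∈ distTriang D) (h : T.mor₁ = 0) :
    Retract T.obj₂ T.obj₃ :=
  have := Triangle.mono₂ T hT h
  have := isSplitMono_of_mono T.mor₂
  { i := T.mor₂, r := retraction T.mor₂ }

end Pretriangulated

end CategoryTheory

section

variable {D : Type*} [Category D]

lemma mem_karClosure_of_retract {S : Set D} {X Y : D} (h : Retract X Y) (hY : Y ∈ S) :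
    X ∈ KarClosure D S :=
  ⟨Y, hY, h.i, h.r, h.retract⟩

lemma subset_karClosure (S : Set D) : S ⊆ KarClosure D S :=
  fun X hX => mem_karClosure_of_retract (Retract.refl X) hX

end

namespace WeightStructure

variable {D : Type*} [Category D] [HasZeroObject D] [Preadditive D] [HasShift D ℤ]
  [∀ n : ℤ, (shiftFunctor D n).Additive] [Pretriangulated D] (w : WeightStructure D)

lemma mem_le_of_retract {X Y : D} (h : Retract X Y) (hY : Y ∈ w.le) : X ∈ w.le :=
  w.le_retract hY ⟨h.i, h.r, h.retract⟩

lemma karClosure_subset_le {S : Set D} (hS : S ⊆ w.le) : KarClosure D S ⊆ w.le := by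
  rintro X ⟨Y, hY, s, r, hsr⟩
  exact w.le_retract (hS hY) ⟨s, r, hsr⟩

lemma karClosure_subset_ge {S : Set D} (hS : S ⊆ w.ge) : KarClosure D S ⊆ w.ge := by
  rintro X ⟨Y, hY, s, r, hsr⟩
  exact w.ge_retract (hS hY) ⟨s, r, hsr⟩

lemma eq_zero_of_iso_shift {X Y Z : D} (hX : X ∈ w.le) (hY : Y ∈ w.ge) (e : Z ≅ Y⟦(1 : ℤ)⟧)
    (f : X ⟶ Z) : f = 0 := by
  rw [← cancel_mono e.hom, zero_comp]
  exact w.orth hX hY _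

section

variable {C} (F : C ⥤ C') [F.CommShift ℤ] [F.IsTriangulated] [F.EssSurj]
  {w : WeightStructure C} (w' : WeightStructure C')

lemma le_subset_karClosure_image_le (hge : ∀ X ∈ w.ge, F.obj X ∈ w'.ge) :
    w'.le ⊆ KarClosure C' (F.obj '' w.le) := by
  intro Y hY
  let e := F.objObjPreimageIso Y
  obtain ⟨L, R, f, g, h, hL, hR, hT⟩ := w.wd (F.objPreimage Y)
  have hFg : F.map g = 0 :=
    w'.eq_zero_of_iso_shift (w'.mem_le_of_retract (.ofIso e) hY) (hge R hR)
      ((F.commShiftIso (1 : ℤ)).app R) _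
  have hr := retractObj₁OfMor₂EqZero (F.map_distinguished _ hT) hFg
  exact mem_karClosure_of_retract ((Retract.ofIso e.symm).trans hr) ⟨L, hL, rfl⟩

lemma ge_subset_karClosure_image_ge (hle : ∀ X ∈ w.le, F.obj X ∈ w'.le) :
    w'.ge ⊆ KarClosure C' (F.obj '' w.ge) := by
  intro Y hY
  let M := F.objPreimage Y
  obtain ⟨L, R, f, g, h, hL, hR, hT⟩ := w.wd (M⟦(1 : ℤ)⟧)
  let e : F.obj (M⟦(1 : ℤ)⟧) ≅ Y⟦(1 : ℤ)⟧ :=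
    (F.commShiftIso (1 : ℤ)).app M ≪≫ (shiftFunctor C' (1 : ℤ)).mapIso (F.objObjPreimageIso Y)
  have hFf : F.map f = 0 := w'.eq_zero_of_iso_shift (hle L hL) hY e _
  have hr : Retract (Y⟦(1 : ℤ)⟧) ((F.obj R)⟦(1 : ℤ)⟧) :=
    (Retract.ofIso e.symm).trans ((retractObj₃OfMor₁EqZero (F.map_distinguished _ hT) hFf).trans
      (.ofIso ((F.commShiftIso (1 : ℤ)).app R)))
  exact mem_karClosure_of_retract (hr.preimage (.ofFullyFaithful _)) ⟨R, hR, rfl⟩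

end

end WeightStructure

/-- An exact functor `F : C ⥤ C'`, essentially surjective on objects, is weight-exact with
respect to `(w, w')` iff `w' = (Kar-closure of F(C_{w≤0}), Kar-closure of F(C_{w≥0}))`. -/
theorem weightExact_iff_karClosure (F : C ⥤ C') [F.CommShift ℤ] [F.IsTriangulated] [F.EssSurj]
    (w : WeightStructure C) (w' : WeightStructure C') :
    ((∀ X ∈ w.le, F.obj X ∈ w'.le) ∧ (∀ X ∈ w.ge, F.obj X ∈ w'.ge)) ↔
      (w'.le = KarClosure C' (F.obj '' w.le) ∧ w'.ge = KarClosure C' (F.obj '' w.ge)) := by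
  constructor
  · rintro ⟨hle, hge⟩
    exact ⟨(WeightStructure.le_subset_karClosure_image_le F w' hge).antisymm
        (w'.karClosure_subset_le (Set.image_subset_iff.2 hle)),
      (WeightStructure.ge_subset_karClosure_image_ge F w' hle).antisymm
        (w'.karClosure_subset_ge (Set.image_subset_iff.2 hge))⟩
  · rintro ⟨hle, hge⟩
    exact ⟨fun X hX => hle ▸ subset_karClosure _ (Set.mem_image_of_mem _ hX),
      fun X hX => hge ▸ subset_karClosure _ (Set.mem_image_of_mem _ hX)⟩
end

section
/- Let w be a weight structure on a triangulated category C and let C' ⊆ C be a full triangulated subcategory whose class of objects contains C_{w≤n} for all n ∈ ℤ (i.e., all w-bounded above objects). Then w restricts to a weight structure on C'. -/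
open CategoryTheory CategoryTheory.Limits CategoryTheory.Pretriangulated ZeroObject

universe v u

variable (C : Type u) [Category.{v} C] [HasZeroObject C] [Preadditive C] [HasShift C ℤ]
  [∀ n : ℤ, (shiftFunctor C n).Additive] [Pretriangulated C]

variable {C' : Type u} [Category.{v} C'] [HasZeroObject C'] [Preadditive C'] [HasShift C' ℤ]
  [∀ n : ℤ, (shiftFunctor C' n).Additive] [Pretriangulated C']

/-! A weight decomposition `L → ι M → R⟦1⟧ → L⟦1⟧` of an object of `C'` has `L ∈ C_{w≤0}`, so
`L` lies in `C'`; as `C'` is full and triangulated, the cone of the lifted map `L → M` is again in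
`C'`, and it is isomorphic to `R⟦1⟧`. Hence the decomposition lives in `C'`. All the other axioms
of a weight structure are inherited along any fully faithful functor commuting with shifts. -/

lemma exists_retraction_map {D E : Type*} [Category D] [Category E] (F : D ⥤ E) {X Y : D}
    (h : ∃ (s : X ⟶ Y) (r : Y ⟶ X), s ≫ r = 𝟙 X) :
    ∃ (s : F.obj X ⟶ F.obj Y) (r : F.obj Y ⟶ F.obj X), s ≫ r = 𝟙 (F.obj X) := by
  obtain ⟨s, r, hsr⟩ := h
  exact ⟨F.map s, F.map r, by rw [← F.map_comp, hsr, F.map_id]⟩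

lemma CategoryTheory.Functor.exists_distinguished_mapTriangle_iso {D : Type*} [Category D]
    [HasZeroObject D] [Preadditive D] [HasShift D ℤ] [∀ n : ℤ, (shiftFunctor D n).Additive]
    [Pretriangulated D]
    (F : C' ⥤ D) [F.CommShift ℤ] [F.IsTriangulated] [F.Full]
    (T : Triangle D) (hT : T ∈ distTriang D) {X Y : C'} (e₁ : F.obj X ≅ T.obj₁)
    (e₂ : F.obj Y ≅ T.obj₂) :
    ∃ T' ∈ distTriang C', T'.obj₂ = Y ∧ Nonempty (F.mapTriangle.obj T' ≅ T) := by
  have comm : F.map (F.preimage (e₁.hom ≫ T.mor₁ ≫ e₂.inv)) ≫ e₂.hom = e₁.hom ≫ T.mor₁ := by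
    simp
  obtain ⟨Z, g, h, hT'⟩ := distinguished_cocone_triangle (F.preimage (e₁.hom ≫ T.mor₁ ≫ e₂.inv))
  exact ⟨_, hT', rfl, ⟨isoTriangleOfIso₁₂ _ _ (F.map_distinguished _ hT') hT e₁ e₂ comm⟩⟩

variable {C}

namespace WeightStructure

variable (w : WeightStructure C)

lemma le_of_iso {X Y : C} (e : X ≅ Y) (hY : Y ∈ w.le) : X ∈ w.le :=
  w.le_retract hY ⟨e.hom, e.inv, e.hom_inv_id⟩

lemma ge_of_iso {X Y : C} (e : X ≅ Y) (hY : Y ∈ w.ge) : X ∈ w.ge :=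
  w.ge_retract hY ⟨e.hom, e.inv, e.hom_inv_id⟩

lemma orth_of_faithful {D : Type*} [Category D] [Preadditive D] [HasShift D ℤ] (ι : D ⥤ C)
    [ι.CommShift ℤ] [ι.PreservesZeroMorphisms] [ι.Faithful] {X Y : D} (hX : ι.obj X ∈ w.le)
    (hY : ι.obj Y ∈ w.ge) (f : X ⟶ Y⟦(1 : ℤ)⟧) : f = 0 := by
  have hιf : ι.map f ≫ ((ι.commShiftIso (1 : ℤ)).app Y).hom = 0 := w.orth hX hY _
  rw [Preadditive.IsIso.comp_right_eq_zero] at hιf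
  exact ι.map_eq_zero_iff.mp hιf

variable (ι : C' ⥤ C) [ι.CommShift ℤ]

lemma exists_weightDecomposition_of_le_essImage [ι.IsTriangulated] [ι.Full]
    (hle : ∀ X ∈ w.le, ι.essImage X) (M : C') :
    ∃ (L R : C') (f : L ⟶ M) (g : M ⟶ R⟦(1 : ℤ)⟧) (h : R⟦(1 : ℤ)⟧ ⟶ L⟦(1 : ℤ)⟧),
      ι.obj L ∈ w.le ∧ ι.obj R ∈ w.ge ∧ Triangle.mk f g h ∈ distTriang C' := by
  obtain ⟨L, R, f, g, h, hL, hR, hdist⟩ := w.wd (ι.obj M)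
  obtain ⟨L', ⟨eL⟩⟩ := hle L hL
  obtain ⟨T, hT, rfl, ⟨e⟩⟩ :=
    ι.exists_distinguished_mapTriangle_iso _ hdist eL (Iso.refl (ι.obj M))
  have hR' : ι.obj (T.obj₃⟦(-1 : ℤ)⟧) ∈ w.ge :=
    w.ge_of_iso ((ι.commShiftIso (-1 : ℤ)).app T.obj₃ ≪≫
      (shiftFunctor C (-1 : ℤ)).mapIso (Triangle.π₃.mapIso e) ≪≫
      (shiftFunctorCompIsoId C (1 : ℤ) (-1 : ℤ) (by omega)).app R) hR
  -- `T.invRotate.rotate` is `T` with third vertex `T.obj₃⟦-1⟧⟦1⟧`, the shape `wd` asks for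
  exact ⟨T.obj₁, T.obj₃⟦(-1 : ℤ)⟧, T.mor₁, _, _, w.le_of_iso (Triangle.π₁.mapIso e) hL, hR',
    rot_of_distTriang _ (inv_rot_of_distTriang _ hT)⟩

def restrict [ι.IsTriangulated] [ι.Full] [ι.Faithful] (hle : ∀ X ∈ w.le, ι.essImage X) :
    WeightStructure C' where
  le := {X | ι.obj X ∈ w.le}
  ge := {X | ι.obj X ∈ w.ge}
  le_retract _ _ hY hr := w.le_retract hY (exists_retraction_map ι hr)
  ge_retract _ _ hY hr := w.ge_retract hY (exists_retraction_map ι hr)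
  le_shift X hX := w.le_of_iso ((ι.commShiftIso (-1 : ℤ)).app X) (w.le_shift hX)
  ge_shift X hX := w.ge_of_iso ((ι.commShiftIso (1 : ℤ)).app X) (w.ge_shift hX)
  orth _ _ hX hY := w.orth_of_faithful ι hX hY
  wd := w.exists_weightDecomposition_of_le_essImage ι hle

end WeightStructure

variable (C)

/-- If a full triangulated subcategory `ι : C' ⥤ C` contains all `w`-bounded above objects
(i.e. all of `C_{w≤n}` for every `n ∈ ℤ`), then `w` restricts to a weight structure on `C'`,
namely `(C_{w≤0} ∩ Ob C', C_{w≥0} ∩ Ob C')`. -/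
theorem weightStructure_restricts
    (ι : C' ⥤ C) [ι.CommShift ℤ] [ι.IsTriangulated] [ι.Full] [ι.Faithful]
    (w : WeightStructure C)
    (hsub : ∀ (X : C) (n : ℤ), X⟦(-n : ℤ)⟧ ∈ w.le → ∃ Y : C', Nonempty (ι.obj Y ≅ X)) :
    ∃ w' : WeightStructure C',
      w'.le = {X : C' | ι.obj X ∈ w.le} ∧ w'.ge = {X : C' | ι.obj X ∈ w.ge} :=
  ⟨w.restrict ι fun X hX =>
    hsub X 0 (w.le_of_iso ((shiftFunctorZero' C (-0 : ℤ) neg_zero).app X) hX), rfl, rfl⟩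
end
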